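/- arXiv:1811.07816 — 3 statements merged into one kernel-verified Lean document; each statement's English description precedes it below -/
import Mathlib

section
/- For real numbers a and b and p ≥ 2, one has (|a|^(p-2) * a - |b|^(p-2) * b) * (a - b) ≥ 2^(2-p) * |a - b|^p. In particular the map a ↦ |a|^(p-2) a is monotone with this quantitative lower bound. -/
private lemma rpow_superadd {q x y : ℝ} (hq : 1 ≤ q) (hx : 0 ≤ x) (hy : 0 ≤ y) :
    x ^ q + y ^ q ≤ (x + y) ^ q := by
  lift x to NNReal using hx
  lift y to NNReal using hy
  have := NNReal.add_rpow_le_rpow_add x y hq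
  exact_mod_cast this

private lemma rpow_add_le' {q x y : ℝ} (hq : 1 ≤ q) (hx : 0 ≤ x) (hy : 0 ≤ y) :
    (x + y) ^ q ≤ 2 ^ (q - 1) * (x ^ q + y ^ q) := by
  lift x to NNReal using hx
  lift y to NNReal using hy
  have := NNReal.rpow_add_le_mul_rpow_add_rpow x y hq
  have h2 : ((2 : NNReal) : ℝ) = (2 : ℝ) := by norm_num
  calc ((x : ℝ) + y) ^ q = (((x + y : NNReal) : ℝ)) ^ q := by push_cast; ring_nf
    _ ≤ 2 ^ (q - 1) * ((x : ℝ) ^ q + (y : ℝ) ^ q) := by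
        have := NNReal.rpow_add_le_mul_rpow_add_rpow x y hq
        exact_mod_cast this

private lemma key (p a b : ℝ) (hp : 2 ≤ p) (hab : b < a) (hs : 0 ≤ a + b) :
    (|a| ^ (p - 2) * a - |b| ^ (p - 2) * b) * (a - b) ≥ 2 ^ (2 - p) * |a - b| ^ p := by
  have hq : (1 : ℝ) ≤ p - 1 := by linarith
  have ha : 0 < a := by nlinarith
  have habs : |a| = a := abs_of_pos ha
  have hdpos : 0 < a - b := by linarith
  have habd : |a - b| = a - b := abs_of_pos hdpos
  have haa : |a| ^ (p - 2) * a = a ^ (p - 1) := by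
    rw [habs, show p - 1 = p - 2 + 1 by ring, Real.rpow_add_one ha.ne']
  rcases le_or_gt 0 b with hb | hb
  · -- 0 ≤ b < a
    have hbabs : |b| = b := abs_of_nonneg hb
    have hbb : |b| ^ (p - 2) * b = b ^ (p - 1) := by
      rcases eq_or_lt_of_le hb with h | h
      · rw [← h]
        simp [Real.zero_rpow (by linarith : p - 1 ≠ 0)]
      · rw [hbabs, show p - 1 = p - 2 + 1 by ring, Real.rpow_add_one h.ne']
    rw [haa, hbb, habd]
    have h1 : b ^ (p - 1) + (a - b) ^ (p - 1) ≤ a ^ (p - 1) := by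
      have := rpow_superadd hq hb hdpos.le
      rwa [add_sub_cancel] at this
    have h2 : (2 : ℝ) ^ (2 - p) ≤ 1 := by
      apply Real.rpow_le_one_of_one_le_of_nonpos (by norm_num) (by linarith)
    have h3 : (a - b) ^ (p - 1) * (a - b) = (a - b) ^ p := by
      rw [show p = p - 1 + 1 by ring, Real.rpow_add_one hdpos.ne']
      ring_nf
    have h4 : 0 ≤ (a - b) ^ p := Real.rpow_nonneg hdpos.le p
    nlinarith [mul_le_mul_of_nonneg_right h1 hdpos.le,
      mul_le_mul_of_nonneg_right h2 h4]
  · -- b < 0 < a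
    set c := -b with hc
    have hcpos : 0 < c := by simp [hc]; linarith
    have hbabs : |b| = c := abs_of_neg hb
    have hbb : |b| ^ (p - 2) * b = -(c ^ (p - 1)) := by
      rw [hbabs]
      have : b = -c := by simp [hc]
      rw [this, mul_neg, show p - 1 = p - 2 + 1 by ring, Real.rpow_add_one hcpos.ne']
    have habc : a - b = a + c := by simp [hc]; ring
    rw [haa, hbb, habd, habc, sub_neg_eq_add]
    have h1 : (a + c) ^ (p - 1) ≤ 2 ^ (p - 2) * (a ^ (p - 1) + c ^ (p - 1)) := by
      have := rpow_add_le' hq ha.le hcpos.le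
      have he : p - 1 - 1 = p - 2 := by ring
      rwa [he] at this
    have hacpos : 0 < a + c := by linarith
    have h3 : (a + c) ^ (p - 1) * (a + c) = (a + c) ^ p := by
      rw [show p = p - 1 + 1 by ring, Real.rpow_add_one hacpos.ne']
      ring_nf
    have h2pos : (0 : ℝ) < 2 ^ (2 - p) := Real.rpow_pos_of_pos (by norm_num) _
    have hmul : (2 : ℝ) ^ (2 - p) * 2 ^ (p - 2) = 1 := by
      rw [← Real.rpow_add (by norm_num)]
      norm_num
    -- goal: (a^(p-1) + c^(p-1)) * (a + c) ≥ 2^(2-p) * (a+c)^p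
    rw [ge_iff_le, ← h3]
    calc 2 ^ (2 - p) * ((a + c) ^ (p - 1) * (a + c))
        ≤ 2 ^ (2 - p) * (2 ^ (p - 2) * (a ^ (p - 1) + c ^ (p - 1)) * (a + c)) := by
          apply mul_le_mul_of_nonneg_left _ h2pos.le
          exact mul_le_mul_of_nonneg_right h1 hacpos.le
      _ = (a ^ (p - 1) + c ^ (p - 1)) * (a + c) := by
          rw [← mul_assoc, ← mul_assoc, hmul, one_mul]

private lemma key2 (p a b : ℝ) (hp : 2 ≤ p) (hab : b < a) :
    (|a| ^ (p - 2) * a - |b| ^ (p - 2) * b) * (a - b) ≥ 2 ^ (2 - p) * |a - b| ^ p := by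
  rcases le_or_gt 0 (a + b) with hs | hs
  · exact key p a b hp hab hs
  · have h := key p (-b) (-a) hp (by linarith) (by linarith)
    have e1 : |(-b)| = |b| := abs_neg b
    have e2 : |(-a)| = |a| := abs_neg a
    have e3 : (-b) - (-a) = a - b := by ring
    rw [e1, e2, e3] at h
    calc 2 ^ (2 - p) * |a - b| ^ p
        ≤ (|b| ^ (p - 2) * -b - |a| ^ (p - 2) * -a) * (a - b) := h
      _ = (|a| ^ (p - 2) * a - |b| ^ (p - 2) * b) * (a - b) := by ring

theorem pointwise_strong_monotonicity (p a b : ℝ) (hp : 2 ≤ p) :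
    (|a| ^ (p - 2) * a - |b| ^ (p - 2) * b) * (a - b) ≥ 2 ^ (2 - p) * |a - b| ^ p := by
  rcases lt_trichotomy a b with h | h | h
  · have h2 := key2 p b a hp h
    rw [abs_sub_comm] at h2
    calc 2 ^ (2 - p) * |a - b| ^ p
        ≤ (|b| ^ (p - 2) * b - |a| ^ (p - 2) * a) * (b - a) := h2
      _ = (|a| ^ (p - 2) * a - |b| ^ (p - 2) * b) * (a - b) := by ring
  · subst h
    simp [Real.zero_rpow (by linarith : p ≠ 0)]
  · exact key2 p a b hp h
end

section
/- For real numbers a and b and p ≥ 2, one has (|a|^(p-2) a - |b|^(p-2) b)(a - b) ≥ c_p · |a - b|^2 · (|a| + |a - b|)^(p-2) for some constant c_p > 0 depending only on p (for instance c_p = 2^(2-p) suffices up to a further constant). -/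
/-!
Write `A = |a| ^ e`, `B = |b| ^ e` with `e = p - 2 ≥ 0`. Then
`(A a - B b)(a - b) = (A + B)(a - b)² / 2 + (A - B)(a² - b²) / 2`, and the last term is
nonnegative because `A - B` and `a² - b²` both have the sign of `|a| - |b|`. Finally
`|a| + |a - b| ≤ 3 max |a| |b|`, so `(|a| + |a - b|) ^ e ≤ 3 ^ e (A + B)`, and
`c = 1 / (2 · 3 ^ e)` works.
-/

open Real

lemma monovary_abs_rpow_sq {e : ℝ} (he : 0 ≤ e) :
    Monovary (fun x : ℝ ↦ |x| ^ e) (fun x ↦ x ^ 2) := fun a b hab ↦ by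
  have : |a| < |b| := sq_lt_sq.mp hab
  exact rpow_le_rpow (abs_nonneg a) this.le he

lemma abs_rpow_add_mul_sq_le {e : ℝ} (he : 0 ≤ e) (a b : ℝ) :
    (|a| ^ e + |b| ^ e) * (a - b) ^ 2 / 2 ≤ (|a| ^ e * a - |b| ^ e * b) * (a - b) := by
  have := (monovary_abs_rpow_sq he).sub_mul_sub_nonneg a b
  linear_combination this / 2

lemma add_abs_sub_rpow_le {e : ℝ} (he : 0 ≤ e) (a b : ℝ) :
    (|a| + |a - b|) ^ e ≤ 3 ^ e * (|a| ^ e + |b| ^ e) := by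
  have hmax : |a| + |a - b| ≤ 3 * max |a| |b| := by
    have := abs_sub a b
    have := le_max_left |a| |b|
    have := le_max_right |a| |b|
    linarith
  calc (|a| + |a - b|) ^ e ≤ (3 * max |a| |b|) ^ e := by gcongr
    _ = 3 ^ e * max (|a| ^ e) (|b| ^ e) := by
      rw [mul_rpow (by norm_num) (by positivity), rpow_max (abs_nonneg a) (abs_nonneg b) he]
    _ ≤ 3 ^ e * (|a| ^ e + |b| ^ e) := by
      gcongr
      exact max_le_add_of_nonneg (by positivity) (by positivity)

theorem pointwise_quasinorm_coercivity (p : ℝ) (hp : 2 ≤ p) :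
    ∃ c : ℝ, 0 < c ∧ ∀ a b : ℝ,
      (|a| ^ (p - 2) * a - |b| ^ (p - 2) * b) * (a - b) ≥
        c * |a - b| ^ (2 : ℝ) * (|a| + |a - b|) ^ (p - 2) := by
  have he : 0 ≤ p - 2 := by linarith
  refine ⟨1 / (2 * 3 ^ (p - 2)), by positivity, fun a b ↦ ?_⟩
  rw [ge_iff_le, rpow_two, sq_abs]
  calc 1 / (2 * 3 ^ (p - 2)) * (a - b) ^ 2 * (|a| + |a - b|) ^ (p - 2)
      ≤ 1 / (2 * 3 ^ (p - 2)) * (a - b) ^ 2 *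
          (3 ^ (p - 2) * (|a| ^ (p - 2) + |b| ^ (p - 2))) := by
        gcongr
        exact add_abs_sub_rpow_le he a b
    _ = (|a| ^ (p - 2) + |b| ^ (p - 2)) * (a - b) ^ 2 / 2 := by
        field_simp
    _ ≤ (|a| ^ (p - 2) * a - |b| ^ (p - 2) * b) * (a - b) := abs_rpow_add_mul_sq_le he a b
end

section
/- Strong L^p monotonicity of the semilinear form: for p ≥ 2 there exists C_L > 0 (one may take C_L = 2^{p−2}) such that for all measurable u, u_h ∈ L^p(Ω), ‖u − u_h‖_{L^p(Ω)}^p ≤ C_L ( B(u; u, u − u_h) − B(u_h; u_h, u − u_h) ), where B(w; u, v) = ∫_Ω |w|^{p−2} u v dx. -/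
/-!
With `φ(t) = |t| ^ (p - 2) * t`, both sides of the pointwise inequality
`|a - b| ^ p ≤ 2 ^ (p - 2) * (φ a - φ b) * (a - b)` are invariant under swapping `a, b` and
under `(a, b) ↦ (-b, -a)`, so one may assume `b ≤ a` and `0 ≤ a + b`. Then
`φ a - φ b ≥ 2 * ((a - b) / 2) ^ (p - 1)`: for `b ≥ 0` by superadditivity of `t ^ (p - 1)`,
for `b < 0` by its midpoint convexity. Integrating gives the theorem; the right-hand integrand is
integrable since it is bounded by `4 * (|u| ^ p + |u_h| ^ p)`.
-/

open MeasureTheory Real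

section SignedPower

variable {p : ℝ}

lemma abs_rpow_sub_two_mul_of_nonneg (hp : p ≠ 1) {a : ℝ} (ha : 0 ≤ a) :
    |a| ^ (p - 2) * a = a ^ (p - 1) := by
  rw [abs_of_nonneg ha, ← rpow_add_one' ha (by contrapose! hp; linarith)]
  ring_nf

lemma abs_rpow_sub_two_mul_of_nonpos (hp : p ≠ 1) {a : ℝ} (ha : a ≤ 0) :
    |a| ^ (p - 2) * a = -(-a) ^ (p - 1) := by
  have h := abs_rpow_sub_two_mul_of_nonneg hp (neg_nonneg.2 ha)
  rw [abs_neg] at h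
  linear_combination -h

lemma abs_rpow_sub_two_mul_le (hp : 1 < p) (a : ℝ) {M : ℝ} (haM : |a| ≤ M) :
    |(|a| ^ (p - 2) * a)| ≤ M ^ (p - 1) := by
  have h := abs_rpow_sub_two_mul_of_nonneg hp.ne' (abs_nonneg a)
  rw [abs_abs] at h
  rw [abs_mul, abs_of_nonneg (rpow_nonneg (abs_nonneg a) _), h]
  exact rpow_le_rpow (abs_nonneg a) haM (by linarith)

lemma abs_mul_sub_le_four_mul (hp : 1 < p) (a b : ℝ) :
    |(|a| ^ (p - 2) * a - |b| ^ (p - 2) * b) * (a - b)| ≤ 4 * (|a| ^ p + |b| ^ p) := by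
  set M := max |a| |b|
  have hM : 0 ≤ M := (abs_nonneg a).trans (le_max_left _ _)
  have hMp : M ^ p ≤ |a| ^ p + |b| ^ p := by
    rcases max_choice |a| |b| with h | h <;> simp only [M, h] <;>
      linarith [rpow_nonneg (abs_nonneg a) p, rpow_nonneg (abs_nonneg b) p]
  have hφ : |(|a| ^ (p - 2) * a - |b| ^ (p - 2) * b)| ≤ 2 * M ^ (p - 1) :=
    (abs_sub _ _).trans <| by
      linarith [abs_rpow_sub_two_mul_le hp a (le_max_left |a| |b| : |a| ≤ M),
        abs_rpow_sub_two_mul_le hp b (le_max_right |a| |b| : |b| ≤ M)]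
  have hsub : |a - b| ≤ 2 * M :=
    (abs_sub a b).trans (by linarith [le_max_left |a| |b|, le_max_right |a| |b|])
  calc |(|a| ^ (p - 2) * a - |b| ^ (p - 2) * b) * (a - b)|
      ≤ 2 * M ^ (p - 1) * (2 * M) := by
        rw [abs_mul]; exact mul_le_mul hφ hsub (abs_nonneg _) (by positivity)
    _ = 4 * (M ^ (p - 1) * M) := by ring
    _ = 4 * M ^ p := by rw [← rpow_add_one' hM (by linarith), sub_add_cancel]
    _ ≤ 4 * (|a| ^ p + |b| ^ p) := by linarith

lemma two_mul_half_add_rpow_le {q x y : ℝ} (hq : 1 ≤ q) (hx : 0 ≤ x) (hy : 0 ≤ y) :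
    2 * ((x + y) / 2) ^ q ≤ x ^ q + y ^ q := by
  have h := (convexOn_rpow hq).2 hx hy (by norm_num : (0 : ℝ) ≤ 1 / 2)
    (by norm_num : (0 : ℝ) ≤ 1 / 2) (by norm_num)
  rw [smul_eq_mul, smul_eq_mul, smul_eq_mul, smul_eq_mul,
    show 1 / 2 * x + 1 / 2 * y = (x + y) / 2 by ring] at h
  linarith

lemma two_mul_half_sub_rpow_le (hp : 2 ≤ p) {a b : ℝ} (hba : b ≤ a) (hab : 0 ≤ a + b) :
    2 * ((a - b) / 2) ^ (p - 1) ≤ |a| ^ (p - 2) * a - |b| ^ (p - 2) * b := by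
  have hq : 1 ≤ p - 1 := by linarith
  have hp1 : p ≠ 1 := by linarith
  rw [abs_rpow_sub_two_mul_of_nonneg hp1 (by linarith : 0 ≤ a)]
  rcases le_total 0 b with hb | hb
  · have hsuper := add_rpow_le_rpow_add hb (sub_nonneg.2 hba) hq
    rw [add_sub_cancel] at hsuper
    have hscale : 2 * ((a - b) / 2) ^ (p - 1) ≤ (a - b) ^ (p - 1) :=
      calc 2 * ((a - b) / 2) ^ (p - 1) ≤ 2 ^ (p - 1) * ((a - b) / 2) ^ (p - 1) := by
            gcongr; simpa using rpow_le_rpow_of_exponent_le (by norm_num : (1 : ℝ) ≤ 2) hq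
        _ = (a - b) ^ (p - 1) := by
            rw [← mul_rpow (by norm_num) (by linarith)]; ring_nf
    rw [abs_rpow_sub_two_mul_of_nonneg hp1 hb]
    linarith
  · rw [abs_rpow_sub_two_mul_of_nonpos hp1 hb, sub_neg_eq_add, sub_eq_add_neg]
    exact two_mul_half_add_rpow_le hq (by linarith) (neg_nonneg.2 hb)

theorem abs_sub_rpow_le_two_rpow_mul (hp : 2 ≤ p) (a b : ℝ) :
    |a - b| ^ p ≤ 2 ^ (p - 2) * ((|a| ^ (p - 2) * a - |b| ^ (p - 2) * b) * (a - b)) := by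
  wlog hba : b ≤ a generalizing a b
  · rw [abs_sub_comm]
    convert this b a (le_of_not_ge hba) using 2
    ring
  wlog hab : 0 ≤ a + b generalizing a b
  · convert this (-b) (-a) (neg_le_neg hba) (by linarith) using 2
    · rw [neg_sub_neg]
    · rw [abs_neg, abs_neg]; ring
  have hc : 0 ≤ (a - b) / 2 := by linarith
  have hc_pow : ((a - b) / 2) ^ p = ((a - b) / 2) ^ (p - 1) * ((a - b) / 2) := by
    rw [← rpow_add_one' hc (by linarith), sub_add_cancel]
  have htwo : (2 : ℝ) ^ p = 2 ^ (p - 2) * 4 := by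
    rw [rpow_sub two_pos, rpow_two]; norm_num
  calc |a - b| ^ p = (2 * ((a - b) / 2)) ^ p := by
        rw [abs_of_nonneg (by linarith)]; ring_nf
    _ = 2 ^ (p - 2) * (2 * ((a - b) / 2) ^ (p - 1) * (a - b)) := by
        rw [mul_rpow zero_le_two hc, htwo, hc_pow]
        ring
    _ ≤ 2 ^ (p - 2) * ((|a| ^ (p - 2) * a - |b| ^ (p - 2) * b) * (a - b)) := by
        gcongr
        exact two_mul_half_sub_rpow_le hp hba hab

end SignedPower

section Integrability

variable {α : Type*} [MeasurableSpace α] {μ : Measure α} {p : ℝ}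

lemma integrable_abs_rpow_of_memLp (hp : 0 < p) {f : α → ℝ}
    (hf : MemLp f (ENNReal.ofReal p) μ) : Integrable (fun x => |f x| ^ p) μ := by
  simpa [ENNReal.toReal_ofReal hp.le, Real.norm_eq_abs] using
    hf.integrable_norm_rpow (by simpa using hp) ENNReal.ofReal_ne_top

lemma integrable_mul_sub_of_memLp (hp : 1 < p) {u v : α → ℝ}
    (hu : MemLp u (ENNReal.ofReal p) μ) (hv : MemLp v (ENNReal.ofReal p) μ) :
    Integrable (fun x => (|u x| ^ (p - 2) * u x - |v x| ^ (p - 2) * v x) * (u x - v x)) μ := by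
  have hu_meas := hu.aestronglyMeasurable.aemeasurable
  have hv_meas := hv.aestronglyMeasurable.aemeasurable
  refine Integrable.mono' (((integrable_abs_rpow_of_memLp (by linarith) hu).add
      (integrable_abs_rpow_of_memLp (by linarith) hv)).const_mul 4)
    (by fun_prop) (ae_of_all _ fun x => abs_mul_sub_le_four_mul hp (u x) (v x))

end Integrability

theorem semilinear_form_strong_monotonicity_general {d : ℕ} (Ω : Set (EuclideanSpace ℝ (Fin d)))
    (p : ℝ) (hp : 2 ≤ p) :
    ∃ C_L : ℝ, 0 < C_L ∧ ∀ u u_h : EuclideanSpace ℝ (Fin d) → ℝ,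
      MemLp u (ENNReal.ofReal p) (volume.restrict Ω) →
      MemLp u_h (ENNReal.ofReal p) (volume.restrict Ω) →
      (∫ x in Ω, |u x - u_h x| ^ p) ≤
        C_L * ∫ x in Ω,
          (|u x| ^ (p - 2) * u x - |u_h x| ^ (p - 2) * u_h x) * (u x - u_h x) := by
  refine ⟨2 ^ (p - 2), by positivity, fun u u_h hu hu_h => ?_⟩
  rw [← integral_const_mul]
  exact integral_mono (integrable_abs_rpow_of_memLp (by linarith) (hu.sub hu_h))
    ((integrable_mul_sub_of_memLp (by linarith) hu hu_h).const_mul _)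
    fun x => abs_sub_rpow_le_two_rpow_mul hp (u x) (u_h x)

theorem semilinear_form_strong_monotonicity {d : ℕ} (Ω : Set (EuclideanSpace ℝ (Fin d)))
    (hΩ : MeasurableSet Ω) (p : ℝ) (hp : 2 ≤ p) :
    ∃ C_L : ℝ, 0 < C_L ∧ ∀ u u_h : EuclideanSpace ℝ (Fin d) → ℝ,
      MemLp u (ENNReal.ofReal p) (volume.restrict Ω) →
      MemLp u_h (ENNReal.ofReal p) (volume.restrict Ω) →
      (∫ x in Ω, |u x - u_h x| ^ p) ≤
        C_L * ∫ x in Ω,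
          (|u x| ^ (p - 2) * u x - |u_h x| ^ (p - 2) * u_h x) * (u x - u_h x) :=
  semilinear_form_strong_monotonicity_general Ω p hp
end
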